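/- arXiv:1809.03358 — 2 statements merged into one kernel-verified Lean document; each statement's English description precedes it below -/
import Mathlib

section
/- Let ℓ : ℝ → ℝ be continuous with compact support contained in [t, ∞) for some t ∈ ℝ. For the dilation group δ^{(t)}_s : x ↦ e^s(x - t) + t fixing t, define F(s) = ∫_ℝ ℓ(x) L(δ^{(t)}_s x) dx where L is the primitive of ℓ. Then dF/ds at s = 0 equals ∫_ℝ (x - t) ℓ(x)² dx. -/
/-!
The primitive `L` has derivative `ℓ`, so by the chain rule the integrand
`ℓ x * L (exp s * (x - t) + t)` has `s`-derivative `ℓ x * ℓ (exp s * (x - t) + t) * exp s * (x - t)`,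
which near `s = 0` is dominated by `‖(x - t) * ℓ x‖` times a constant; this is integrable since
`ℓ` has compact support, so we may differentiate under the integral sign and set `s = 0`.
-/

open Real MeasureTheory Set

theorem hasDerivAt_integral_Iic {E : Type*} [NormedAddCommGroup E] [NormedSpace ℝ E]
    [CompleteSpace E] {f : ℝ → E} (hf : Integrable f) {y : ℝ} (hy : ContinuousAt f y) :
    HasDerivAt (fun x => ∫ a in Iic x, f a) (f y) y := by
  have hsplit : (fun x => ∫ a in Iic x, f a) = fun x => (∫ a in Iic y, f a) + ∫ a in y..x, f a := by
    funext x
    rw [← intervalIntegral.integral_Iic_sub_Iic hf.integrableOn hf.integrableOn]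
    abel
  rw [hsplit]
  exact (intervalIntegral.integral_hasDerivAt_right hf.intervalIntegrable
    hf.aestronglyMeasurable.stronglyMeasurableAtFilter hy).const_add _

/-- The dilation `δ^{(t)}_s`. -/
noncomputable def dilation (t s x : ℝ) : ℝ := exp s * (x - t) + t

theorem continuous_dilation (t s : ℝ) : Continuous (dilation t s) := by
  unfold dilation
  fun_prop

@[simp]
theorem dilation_zero (t x : ℝ) : dilation t 0 x = x := by
  simp [dilation]

theorem hasDerivAt_dilation (t x s : ℝ) :
    HasDerivAt (fun s => dilation t s x) (exp s * (x - t)) s :=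
  ((hasDerivAt_exp s).mul_const _).add_const t

theorem hasDerivAt_integral_mul_comp_dilation {g L L' : ℝ → ℝ} {M : ℝ} (t s₀ : ℝ)
    (hg : Continuous g) (hg_supp : HasCompactSupport g)
    (hL : ∀ y, HasDerivAt L (L' y) y) (hL'_bdd : ∀ y, ‖L' y‖ ≤ M) :
    HasDerivAt (fun s => ∫ x, g x * L (dilation t s x))
      (∫ x, g x * (L' (dilation t s₀ x) * (exp s₀ * (x - t)))) s₀ := by
  have hL_cont : Continuous L := continuous_iff_continuousAt.2 fun y => (hL y).continuousAt
  have hL'_meas : Measurable L' := by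
    have : deriv L = L' := funext fun y => (hL y).deriv
    exact this ▸ measurable_deriv L
  have hmeas : ∀ s, AEStronglyMeasurable (fun x => g x * L (dilation t s x)) volume :=
    fun s => (hg.mul (hL_cont.comp (continuous_dilation t s))).aestronglyMeasurable
  have hint : Integrable (fun x => g x * L (dilation t s₀ x)) :=
    (hg.mul (hL_cont.comp (continuous_dilation t s₀))).integrable_of_hasCompactSupport
      hg_supp.mul_right
  have hmeas' : AEStronglyMeasurable
      (fun x => g x * (L' (dilation t s₀ x) * (exp s₀ * (x - t)))) volume := by
    refine hg.aestronglyMeasurable.mul (AEStronglyMeasurable.mul ?_ ?_)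
    · exact (hL'_meas.comp (continuous_dilation t s₀).measurable).aestronglyMeasurable
    · exact (by fun_prop : Continuous fun x : ℝ => exp s₀ * (x - t)).aestronglyMeasurable
  have hbound_int : Integrable fun x => ‖(x - t) * g x‖ * (M * exp (s₀ + 1)) :=
    (((continuous_id.sub continuous_const).mul hg).integrable_of_hasCompactSupport
      hg_supp.mul_left).norm.mul_const _
  have hbound : ∀ᵐ x : ℝ, ∀ s ∈ Metric.ball s₀ 1,
      ‖g x * (L' (dilation t s x) * (exp s * (x - t)))‖ ≤ ‖(x - t) * g x‖ * (M * exp (s₀ + 1)) := by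
    refine Filter.Eventually.of_forall fun x s hs => ?_
    have hexp : exp s ≤ exp (s₀ + 1) := by
      rw [Metric.mem_ball, dist_eq] at hs
      exact exp_le_exp.2 (by linarith [le_abs_self (s - s₀)])
    calc ‖g x * (L' (dilation t s x) * (exp s * (x - t)))‖
        = ‖(x - t) * g x‖ * (‖L' (dilation t s x)‖ * exp s) := by
          simp only [norm_mul, norm_eq_abs, abs_exp]
          ring
      _ ≤ ‖(x - t) * g x‖ * (M * exp (s₀ + 1)) := by
          gcongr
          · exact (norm_nonneg _).trans (hL'_bdd 0)
          · exact hL'_bdd _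
  have hderiv : ∀ᵐ x : ℝ, ∀ s ∈ Metric.ball s₀ 1,
      HasDerivAt (fun s => g x * L (dilation t s x))
        (g x * (L' (dilation t s x) * (exp s * (x - t)))) s :=
    Filter.Eventually.of_forall fun x s _ =>
      ((hL _).comp s (hasDerivAt_dilation t x s)).const_mul (g x)
  exact (hasDerivAt_integral_of_dominated_loc_of_deriv_le (Metric.ball_mem_nhds s₀ one_pos)
    (Filter.Eventually.of_forall hmeas) hint hmeas' hbound hbound_int hderiv).2

theorem derivative_of_dilated_pairing_general
    (t : ℝ) (ℓ : ℝ → ℝ) (hcont : Continuous ℓ) (hsupp : HasCompactSupport ℓ)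
    (L : ℝ → ℝ) (hL : ∀ x, L x = ∫ a in Set.Iic x, ℓ a)
    (F : ℝ → ℝ)
    (hF : ∀ s, F s = ∫ x, ℓ x * L (Real.exp s * (x - t) + t)) :
    HasDerivAt F (∫ x, (x - t) * (ℓ x) ^ 2) 0 := by
  have hL_deriv : ∀ y, HasDerivAt L (ℓ y) y := fun y => by
    rw [show L = fun x => ∫ a in Iic x, ℓ a from funext hL]
    exact hasDerivAt_integral_Iic (hcont.integrable_of_hasCompactSupport hsupp) hcont.continuousAt
  obtain ⟨M, hM⟩ := hsupp.exists_bound_of_continuous hcont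
  have hderiv := hasDerivAt_integral_mul_comp_dilation t 0 hcont hsupp hL_deriv hM
  rw [show F = fun s => ∫ x, ℓ x * L (dilation t s x) from funext hF]
  convert hderiv using 2
  funext x
  simp only [dilation_zero, exp_zero, one_mul]
  ring

/-- For `ℓ` continuous with compact support in `[t,∞)` and the dilation group
`δ^{(t)}_s : x ↦ e^s (x - t) + t` fixing `t`, the function
`F(s) = ∫ ℓ(x) L(δ^{(t)}_s x) dx` satisfies `F'(0) = ∫ (x - t) ℓ(x)² dx`,
where `L` is the primitive of `ℓ`. -/
theorem derivative_of_dilated_pairing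
    (t : ℝ) (ℓ : ℝ → ℝ) (hcont : Continuous ℓ) (hsupp : HasCompactSupport ℓ)
    (hsupp_t : tsupport ℓ ⊆ Set.Ici t)
    (L : ℝ → ℝ) (hL : ∀ x, L x = ∫ a in Set.Iic x, ℓ a)
    (F : ℝ → ℝ)
    (hF : ∀ s, F s = ∫ x, ℓ x * L (Real.exp s * (x - t) + t)) :
    HasDerivAt F (∫ x, (x - t) * (ℓ x) ^ 2) 0 :=
  derivative_of_dilated_pairing_general t ℓ hcont hsupp L hL F hF
end

section
/- For a real Schwartz function h on ℝ define ‖h‖² = ∫_0^∞ p |ĥ(p)|² dp, where ĥ is the Fourier transform. If h, k are real Schwartz functions, then the sesquilinear pairing ∫_0^∞ p ĥ(p) conj(k̂(p)) dp has imaginary part equal to (1/2)∫_ℝ k′(x) h(x) dx. -/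
/-!
Since `ĥ(p) = (2π)^{-1/2} 𝓕h(p / 2π)`, where `𝓕` has kernel `e^{-2πixξ}`, the pairing equals
`2π J` with `J = ∫_0^∞ ξ 𝓕h(ξ) conj (𝓕k(ξ)) dξ`. For real `h, k` the integrand `φ` satisfies
`φ(-ξ) = -conj (φ ξ)`, hence `∫_ℝ φ = J - conj J = 2i Im J`. On the other hand
`ξ conj (𝓕k(ξ)) = (i / 2π) conj (𝓕k'(ξ))`, so Plancherel gives `∫_ℝ φ = (i / 2π) ∫ h k'`.
-/

open Real MeasureTheory Complex
open scoped FourierTransform ComplexConjugate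

theorem conj_fourier_ofReal {V : Type*} [NormedAddCommGroup V] [InnerProductSpace ℝ V]
    [FiniteDimensional ℝ V] [MeasurableSpace V] [BorelSpace V] (f : V → ℝ) (w : V) :
    conj (𝓕 (fun v ↦ (f v : ℂ)) w) = 𝓕 (fun v ↦ (f v : ℂ)) (-w) := by
  simp only [Real.fourier_eq, ← integral_conj, Circle.smul_def, smul_eq_mul, map_mul, conj_ofReal,
    ← Circle.coe_inv_eq_conj, ← AddChar.map_neg_eq_inv, inner_neg_right, neg_neg]

theorem integral_mul_exp_neg_I_mul_eq_fourier (f : ℝ → ℂ) (p : ℝ) :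
    ∫ x, f x * exp (-(I * p * x)) = 𝓕 f (p / (2 * π)) := by
  rw [Real.fourier_real_eq_integral_exp_smul]
  congr 1 with x
  rw [smul_eq_mul, mul_comm]
  congr 2
  push_cast
  field_simp

/-- With `A = 𝓕f`, `B = 𝓕g` this is the paper's one-particle inner product `⟨g, f⟩`. -/
noncomputable def oneParticlePairing (A B : ℝ → ℂ) : ℂ :=
  ∫ ξ in Set.Ioi (0 : ℝ), (ξ : ℂ) * A ξ * conj (B ξ)

theorem oneParticlePairing_rescale (A B : ℝ → ℂ) :
    oneParticlePairing (fun p ↦ (√(2 * π))⁻¹ • A (p / (2 * π)))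
        (fun p ↦ (√(2 * π))⁻¹ • B (p / (2 * π)))
      = 2 * π * oneParticlePairing A B := by
  have hsq : (√(2 * π))⁻¹ * (√(2 * π))⁻¹ = (2 * π)⁻¹ := by
    rw [← mul_inv, mul_self_sqrt (by positivity)]
  have hintegrand : ∀ p : ℝ, (p : ℂ) * ((√(2 * π))⁻¹ • A (p / (2 * π)))
      * conj ((√(2 * π))⁻¹ • B (p / (2 * π)))
      = (((2 * π)⁻¹ * p : ℝ) : ℂ) * A ((2 * π)⁻¹ * p) * conj (B ((2 * π)⁻¹ * p)) := by
    intro p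
    simp only [real_smul, map_mul, conj_ofReal, div_eq_inv_mul]
    rw [← hsq]
    push_cast
    ring
  simp_rw [oneParticlePairing, hintegrand]
  rw [integral_comp_mul_left_Ioi (fun ξ : ℝ ↦ (ξ : ℂ) * A ξ * conj (B ξ)) 0 (by positivity),
    inv_inv, mul_zero, real_smul]
  push_cast
  rfl

theorem integral_eq_two_mul_im_setIntegral_Ioi_mul_I {φ : ℝ → ℂ} (hφ : Integrable φ)
    (hsymm : ∀ x, φ (-x) = -conj (φ x)) :
    ∫ x, φ x = ↑(2 * (∫ x in Set.Ioi 0, φ x).im) * I := by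
  have hneg : ∫ x in Set.Iic 0, φ x = -conj (∫ x in Set.Ioi 0, φ x) := by
    have hreflect := integral_comp_neg_Ioi 0 φ
    rw [neg_zero] at hreflect
    rw [← hreflect, ← integral_conj, ← integral_neg]
    simp_rw [hsymm]
  rw [← sub_conj, ← intervalIntegral.integral_Iic_add_Ioi hφ.integrableOn hφ.integrableOn, hneg]
  ring

namespace SchwartzMap

theorem coe_derivCLM {𝕜 F : Type*} [RCLike 𝕜] [NormedAddCommGroup F] [NormedSpace ℝ F]
    [NormedSpace 𝕜 F] [SMulCommClass ℝ 𝕜 F] (g : 𝓢(ℝ, F)) : ⇑(derivCLM 𝕜 F g) = deriv g :=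
  funext (derivCLM_apply 𝕜 g)

noncomputable def toComplex {V : Type*} [NormedAddCommGroup V] [NormedSpace ℝ V] (f : 𝓢(V, ℝ)) : 𝓢(V, ℂ) :=
  postcompCLM (𝕜 := ℝ) ofRealCLM f

@[simp]
theorem toComplex_apply {V : Type*} [NormedAddCommGroup V] [NormedSpace ℝ V] (f : 𝓢(V, ℝ))
    (x : V) : f.toComplex x = f x :=
  rfl

theorem conj_fourier_toComplex {V : Type*} [NormedAddCommGroup V] [InnerProductSpace ℝ V]
    [FiniteDimensional ℝ V] [MeasurableSpace V] [BorelSpace V] (f : 𝓢(V, ℝ)) (w : V) :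
    conj (𝓕 f.toComplex w) = 𝓕 f.toComplex (-w) :=
  conj_fourier_ofReal f w

theorem deriv_toComplex (f : 𝓢(ℝ, ℝ)) (x : ℝ) : deriv f.toComplex x = deriv f x :=
  f.differentiableAt.hasDerivAt.ofReal_comp.deriv

theorem ofReal_mul_conj_fourier (g : 𝓢(ℝ, ℂ)) (ξ : ℝ) :
    (ξ : ℂ) * conj (𝓕 g ξ) = I / (2 * π) * conj (𝓕 (derivCLM ℝ ℂ g) ξ) := by
  rw [fourier_coe, fourier_coe, coe_derivCLM, Real.fourier_deriv g.integrable g.differentiable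
    (coe_derivCLM (𝕜 := ℝ) g ▸ (derivCLM ℝ ℂ g).integrable)]
  simp only [smul_eq_mul, map_mul, map_ofNat, conj_ofReal, conj_I]
  field_simp
  linear_combination (ξ * conj (𝓕 (⇑g) ξ)) * I_sq

theorem ofReal_mul_fourier_mul_conj_fourier_eq_inner (f g : 𝓢(ℝ, ℂ)) (ξ : ℝ) :
    (ξ : ℂ) * 𝓕 f ξ * conj (𝓕 g ξ) = I / (2 * π) * inner ℂ (𝓕 (derivCLM ℝ ℂ g) ξ) (𝓕 f ξ) := by
  rw [mul_right_comm, ofReal_mul_conj_fourier, RCLike.inner_apply]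
  ring

theorem integrable_ofReal_mul_fourier_mul_conj_fourier (f g : 𝓢(ℝ, ℂ)) :
    Integrable fun ξ : ℝ ↦ (ξ : ℂ) * 𝓕 f ξ * conj (𝓕 g ξ) := by
  set G := (𝓕 (derivCLM ℝ ℂ g)).toBoundedContinuousFunction
  have hprod : Integrable fun ξ ↦ 𝓕 f ξ * conj (G ξ) := by
    refine (𝓕 f).integrable.mul_bdd (c := ‖G‖)
      (continuous_conj.comp G.continuous).aestronglyMeasurable
      (Filter.Eventually.of_forall fun ξ ↦ ?_)
    rw [RCLike.norm_conj]
    exact G.norm_coe_le_norm ξ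
  refine (hprod.const_mul (I / (2 * π))).congr (Filter.Eventually.of_forall fun ξ ↦ ?_)
  simp only [ofReal_mul_fourier_mul_conj_fourier_eq_inner, RCLike.inner_apply]
  rfl

theorem integral_ofReal_mul_fourier_mul_conj_fourier (f g : 𝓢(ℝ, ℂ)) :
    ∫ ξ : ℝ, (ξ : ℂ) * 𝓕 f ξ * conj (𝓕 g ξ) = I / (2 * π) * ∫ x, f x * conj (deriv g x) := by
  simp_rw [ofReal_mul_fourier_mul_conj_fourier_eq_inner]
  rw [integral_const_mul, integral_inner_fourier_fourier, coe_derivCLM]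
  simp only [RCLike.inner_apply]

theorem neg_mul_fourier_toComplex_mul_conj (h k : 𝓢(ℝ, ℝ)) (ξ : ℝ) :
    ((-ξ : ℝ) : ℂ) * 𝓕 h.toComplex (-ξ) * conj (𝓕 k.toComplex (-ξ))
      = -conj ((ξ : ℂ) * 𝓕 h.toComplex ξ * conj (𝓕 k.toComplex ξ)) := by
  have hk : conj (𝓕 k.toComplex (-ξ)) = 𝓕 k.toComplex ξ := by
    rw [conj_fourier_toComplex, neg_neg]
  rw [hk, map_mul, map_mul, conj_conj, conj_ofReal, conj_fourier_toComplex]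
  push_cast
  ring

theorem two_mul_im_oneParticlePairing_fourier_toComplex (h k : 𝓢(ℝ, ℝ)) :
    2 * (oneParticlePairing ⇑(𝓕 h.toComplex : 𝓢(ℝ, ℂ)) ⇑(𝓕 k.toComplex : 𝓢(ℝ, ℂ))).im
      = (∫ x, deriv k x * h x) / (2 * π) := by
  apply ofReal_injective
  apply mul_right_cancel₀ I_ne_zero
  rw [oneParticlePairing, ← integral_eq_two_mul_im_setIntegral_Ioi_mul_I
    (integrable_ofReal_mul_fourier_mul_conj_fourier _ _) (neg_mul_fourier_toComplex_mul_conj h k),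
    integral_ofReal_mul_fourier_mul_conj_fourier, ofReal_div, ← integral_complex_ofReal]
  simp only [deriv_toComplex, toComplex_apply, conj_ofReal, ofReal_mul, mul_comm]
  push_cast
  ring

end SchwartzMap

/-- For real Schwartz functions `h, k` with Fourier transforms
`ĥ(p) = (2π)^{-1/2} ∫ h(x) e^{-ipx} dx`, the imaginary part of the
one-particle pairing `∫_0^∞ p ĥ(p) conj(k̂(p)) dp` equals
`(1/2) ∫ k'(x) h(x) dx`. -/
theorem one_particle_pairing_imaginary_part
    (h k : SchwartzMap ℝ ℝ)
    (Fh Fk : ℝ → ℂ)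
    (hFh : ∀ p, Fh p = (Real.sqrt (2 * π))⁻¹ •
        ∫ x : ℝ, (h x : ℂ) * Complex.exp (-(Complex.I * p * x)))
    (hFk : ∀ p, Fk p = (Real.sqrt (2 * π))⁻¹ •
        ∫ x : ℝ, (k x : ℂ) * Complex.exp (-(Complex.I * p * x))) :
    (∫ p in Set.Ioi (0 : ℝ), (p : ℂ) * Fh p * (starRingEnd ℂ) (Fk p)).im
      = (1/2) * ∫ x : ℝ, deriv (fun y => k y) x * h x := by
  have hFh' : Fh = fun p ↦ (√(2 * π))⁻¹ • 𝓕 h.toComplex (p / (2 * π)) :=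
    funext fun p ↦ by rw [hFh, integral_mul_exp_neg_I_mul_eq_fourier]; rfl
  have hFk' : Fk = fun p ↦ (√(2 * π))⁻¹ • 𝓕 k.toComplex (p / (2 * π)) :=
    funext fun p ↦ by rw [hFk, integral_mul_exp_neg_I_mul_eq_fourier]; rfl
  have hJ := SchwartzMap.two_mul_im_oneParticlePairing_fourier_toComplex h k
  change (oneParticlePairing Fh Fk).im = _
  rw [hFh', hFk', oneParticlePairing_rescale,
    show (2 * π : ℂ) = ((2 * π : ℝ) : ℂ) by push_cast; rfl, im_ofReal_mul]
  field_simp at hJ ⊢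
  linarith
end
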